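/- Let α < 0 < β and define C_{α,β} = sup over γ ∈ (−1/β, −1/α) of C_{α,β,γ}. Then C_{α,β} = 2^{1/β} if 0 < β ≤ −α, and C_{α,β} = 2^{−1/α} if β > −α; equivalently, C_{α,β} = 2^{1/min{|α|, β}}. -/

import Mathlib

/-!
With `r_p(ε) = (ε^{γp+1} + 1) / (1 + ε)`, which lies in `(0, 2]` for `ε ∈ [0,1]` and `γp + 1 ≥ 0`,
one has `C_{α,β,γ}(ε) = r_β(ε)^{1/β} / r_α(ε)^{1/α}`. If `γ ≤ 0` then `r_α ≤ 1`, so the value is at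
most `2^{1/β}`; if `γ ≥ 0` then `r_β ≤ 1`, so it is at most `2^{-1/α}`. Both bounds are approached
from inside `Γ_{α,β}`: at the endpoints `γ = -1/β` and `γ = -1/α` the value at `ε = 0` is exactly
`2^{1/β}` resp. `2^{-1/α}`, and `C_{α,β,γ}(ε)` is continuous in `γ` for `ε > 0` and in `ε` at `0`.
-/

open Set

/-- The function `C_{α,β,γ}(ε)` from the paper:
`C_{α,β,γ}(ε) = (ε^{γβ+1}+1)^{1/β} (1+ε)^{1/α} / ((ε^{γα+1}+1)^{1/α} (1+ε)^{1/β})`. -/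
noncomputable def Cfun (α β γ ε : ℝ) : ℝ :=
  ((ε ^ (γ * β + 1) + 1) ^ (1 / β) * (1 + ε) ^ (1 / α)) /
    ((ε ^ (γ * α + 1) + 1) ^ (1 / α) * (1 + ε) ^ (1 / β))

/-- `C_{α,β,γ}`: the maximum of `C_{α,β,γ}(ε)` over `ε ∈ [0,1]`. -/
noncomputable def Cmax (α β γ : ℝ) : ℝ :=
  sSup (Cfun α β γ '' Icc (0 : ℝ) 1)

section

variable {α β γ ε : ℝ}

lemma Cfun_eq_div_rpow (hε : 0 ≤ ε) :
    Cfun α β γ ε = ((ε ^ (γ * β + 1) + 1) / (1 + ε)) ^ (1 / β) /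
      ((ε ^ (γ * α + 1) + 1) / (1 + ε)) ^ (1 / α) := by
  have hA : ∀ p : ℝ, 0 ≤ ε ^ (γ * p + 1) + 1 := fun p => by positivity
  have h1ε : 0 < 1 + ε := by linarith
  rw [Cfun, Real.div_rpow (hA β) h1ε.le, Real.div_rpow (hA α) h1ε.le]
  have := Real.rpow_pos_of_pos h1ε (1 / α)
  have := Real.rpow_pos_of_pos h1ε (1 / β)
  field_simp

lemma rpow_add_one_div_one_add_le_two {e : ℝ} (hε : ε ∈ Icc (0 : ℝ) 1) (he : 0 ≤ e) :
    (ε ^ e + 1) / (1 + ε) ≤ 2 := by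
  have := Real.rpow_le_one hε.1 hε.2 he
  rw [div_le_iff₀ (by linarith [hε.1])]
  linarith [hε.1]

lemma rpow_add_one_div_one_add_le_one {e : ℝ} (hε : ε ∈ Icc (0 : ℝ) 1) (he : 1 ≤ e) :
    (ε ^ e + 1) / (1 + ε) ≤ 1 := by
  have := Real.rpow_le_rpow_of_exponent_ge' hε.1 hε.2 zero_le_one he
  rw [Real.rpow_one] at this
  rw [div_le_one (by linarith [hε.1])]
  linarith

lemma Cfun_le_max (hα : α < 0) (hβ : 0 < β) (hγβ : 0 ≤ γ * β + 1) (hγα : 0 ≤ γ * α + 1)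
    (hε : ε ∈ Icc (0 : ℝ) 1) :
    Cfun α β γ ε ≤ max ((2 : ℝ) ^ (1 / β)) ((2 : ℝ) ^ (-(1 / α))) := by
  rw [Cfun_eq_div_rpow hε.1]
  set x := (ε ^ (γ * β + 1) + 1) / (1 + ε)
  set y := (ε ^ (γ * α + 1) + 1) / (1 + ε)
  have hx : 0 < x := by have := hε.1; positivity
  have hy : 0 < y := by have := hε.1; positivity
  have hβ' : 0 ≤ 1 / β := by positivity
  have hα' : 1 / α ≤ 0 := by rw [one_div_nonpos]; exact hα.le
  rcases le_total γ 0 with hγ | hγ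
  · have hxβ : x ^ (1 / β) ≤ 2 ^ (1 / β) :=
      Real.rpow_le_rpow hx.le (rpow_add_one_div_one_add_le_two hε hγβ) hβ'
    have hyα : 1 ≤ y ^ (1 / α) := Real.one_le_rpow_of_pos_of_le_one_of_nonpos hy
      (rpow_add_one_div_one_add_le_one hε (by nlinarith)) hα'
    exact le_max_of_le_left ((div_le_self (by positivity) hyα).trans hxβ)
  · have hxβ : x ^ (1 / β) ≤ 1 :=
      Real.rpow_le_one hx.le (rpow_add_one_div_one_add_le_one hε (by nlinarith)) hβ'
    have hyα : 2 ^ (1 / α) ≤ y ^ (1 / α) :=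
      Real.rpow_le_rpow_of_nonpos hy (rpow_add_one_div_one_add_le_two hε hγα) hα'
    refine le_max_of_le_right ?_
    calc x ^ (1 / β) / y ^ (1 / α) ≤ 1 / 2 ^ (1 / α) :=
          div_le_div₀ zero_le_one hxβ (by positivity) hyα
      _ = 2 ^ (-(1 / α)) := by rw [Real.rpow_neg zero_le_two, one_div]

lemma continuous_Cfun_left (hε : 0 < ε) : Continuous fun γ => Cfun α β γ ε := by
  have hA : ∀ p q : ℝ, Continuous fun γ : ℝ => (ε ^ (γ * p + 1) + 1) ^ q := fun p q =>
    ((continuous_const.rpow (by fun_prop) fun _ => Or.inl hε.ne').add continuous_const).rpow_const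
      fun _ => Or.inl (add_pos (Real.rpow_pos_of_pos hε _) one_pos).ne'
  refine ((hA β _).mul continuous_const).div ((hA α _).mul continuous_const) fun γ => ?_
  have := Real.rpow_pos_of_pos (by positivity : 0 < ε ^ (γ * α + 1) + 1) (1 / α)
  have := Real.rpow_pos_of_pos (by positivity : 0 < 1 + ε) (1 / β)
  positivity

lemma continuousAt_Cfun_zero (hγβ : 0 ≤ γ * β + 1) (hγα : 0 ≤ γ * α + 1) :
    ContinuousAt (Cfun α β γ) 0 := by
  unfold Cfun
  have hA : ∀ e : ℝ, 0 ≤ e → ContinuousAt (fun ε : ℝ => ε ^ e + 1) 0 := fun e he =>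
    (Real.continuousAt_rpow_const 0 e (Or.inr he)).add continuousAt_const
  have hpos : ∀ e : ℝ, (0 : ℝ) ^ e + 1 ≠ 0 := fun e => by
    have := Real.rpow_nonneg le_rfl e; positivity
  have h1 : ContinuousAt (fun ε : ℝ => 1 + ε) 0 := by fun_prop
  refine ContinuousAt.div ?_ ?_ ?_
  · exact ((hA _ hγβ).rpow_const (Or.inl (hpos _))).mul (h1.rpow_const (Or.inl (by norm_num)))
  · exact ((hA _ hγα).rpow_const (Or.inl (hpos _))).mul (h1.rpow_const (Or.inl (by norm_num)))
  · have := Real.rpow_nonneg (le_refl (0:ℝ)) (γ * α + 1)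
    simp only [add_zero, Real.one_rpow, mul_one]
    positivity

lemma Cfun_neg_inv_right_zero (hβ : β ≠ 0) (hαβ : α ≠ β) :
    Cfun α β (-(1 / β)) 0 = 2 ^ (1 / β) := by
  have hβ' : -(1 / β) * β + 1 = 0 := by field_simp; ring
  have hα' : -(1 / β) * α + 1 = (β - α) / β := by field_simp; ring
  rw [Cfun, hβ', hα', Real.zero_rpow (div_ne_zero (sub_ne_zero.mpr hαβ.symm) hβ)]
  norm_num

lemma Cfun_neg_inv_left_zero (hα : α ≠ 0) (hαβ : α ≠ β) :
    Cfun α β (-(1 / α)) 0 = 2 ^ (-(1 / α)) := by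
  have hα' : -(1 / α) * α + 1 = 0 := by field_simp; ring
  have hβ' : -(1 / α) * β + 1 = (α - β) / α := by field_simp; ring
  rw [Cfun, hβ', hα', Real.zero_rpow (div_ne_zero (sub_ne_zero.mpr hαβ) hα),
    Real.rpow_neg zero_le_two]
  norm_num

lemma neg_one_div_lt_neg_one_div (hα : α < 0) (hβ : 0 < β) : -(1 / β) < -(1 / α) := by
  have : 1 / α < 0 := one_div_neg.mpr hα
  have : 0 < 1 / β := by positivity
  linarith

lemma exponents_nonneg_of_mem_Icc (hα : α < 0) (hβ : 0 < β)
    (hγ : γ ∈ Icc (-(1 / β)) (-(1 / α))) : 0 ≤ γ * β + 1 ∧ 0 ≤ γ * α + 1 := by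
  obtain ⟨h₁, h₂⟩ := hγ
  have hβ' := mul_le_mul_of_nonneg_right h₁ hβ.le
  have hα' := mul_le_mul_of_nonpos_right h₂ hα.le
  rw [neg_mul, one_div_mul_cancel hβ.ne'] at hβ'
  rw [neg_mul, one_div_mul_cancel hα.ne] at hα'
  constructor <;> linarith

lemma Cmax_le_max (hα : α < 0) (hβ : 0 < β) (hγ : γ ∈ Icc (-(1 / β)) (-(1 / α))) :
    Cmax α β γ ≤ max ((2 : ℝ) ^ (1 / β)) ((2 : ℝ) ^ (-(1 / α))) := by
  obtain ⟨hγβ, hγα⟩ := exponents_nonneg_of_mem_Icc hα hβ hγ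
  refine Real.sSup_le ?_ (le_max_of_le_left (by positivity))
  rintro _ ⟨ε, hε, rfl⟩
  exact Cfun_le_max hα hβ hγβ hγα hε

lemma Cfun_le_Cmax (hα : α < 0) (hβ : 0 < β) (hγ : γ ∈ Icc (-(1 / β)) (-(1 / α)))
    (hε : ε ∈ Icc (0 : ℝ) 1) : Cfun α β γ ε ≤ Cmax α β γ := by
  obtain ⟨hγβ, hγα⟩ := exponents_nonneg_of_mem_Icc hα hβ hγ
  refine le_csSup ⟨max ((2 : ℝ) ^ (1 / β)) ((2 : ℝ) ^ (-(1 / α))), ?_⟩ (mem_image_of_mem _ hε)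
  rintro _ ⟨ε, hε, rfl⟩
  exact Cfun_le_max hα hβ hγβ hγα hε

lemma Cfun_zero_le_sSup_Cmax (hα : α < 0) (hβ : 0 < β) (hγ : γ ∈ Icc (-(1 / β)) (-(1 / α))) :
    Cfun α β γ 0 ≤ sSup (Cmax α β '' Ioo (-(1 / β)) (-(1 / α))) := by
  set M := sSup (Cmax α β '' Ioo (-(1 / β)) (-(1 / α)))
  have hne : -(1 / β) ≠ -(1 / α) := (neg_one_div_lt_neg_one_div hα hβ).ne
  have hbdd : BddAbove (Cmax α β '' Ioo (-(1 / β)) (-(1 / α))) := by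
    refine ⟨max ((2 : ℝ) ^ (1 / β)) ((2 : ℝ) ^ (-(1 / α))), ?_⟩
    rintro _ ⟨γ, hγ, rfl⟩
    exact Cmax_le_max hα hβ (Ioo_subset_Icc_self hγ)
  -- `Cfun` is not jointly continuous at `ε = 0` for `γ` an endpoint of the interval,
  -- so pass to the limit in `γ` first, then in `ε`.
  have hpos : ∀ ε ∈ Ioc (0 : ℝ) 1, Cfun α β γ ε ≤ M := by
    intro ε hε
    refine ContinuousWithinAt.closure_le (closure_Ioo hne ▸ hγ)
      (continuous_Cfun_left hε.1).continuousWithinAt continuousWithinAt_const ?_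
    intro γ' hγ'
    exact (Cfun_le_Cmax hα hβ (Ioo_subset_Icc_self hγ') (Ioc_subset_Icc_self hε)).trans
      (le_csSup hbdd (mem_image_of_mem _ hγ'))
  obtain ⟨hγβ, hγα⟩ := exponents_nonneg_of_mem_Icc hα hβ hγ
  have h0 : (0 : ℝ) ∈ closure (Ioc 0 1) :=
    closure_Ioc (zero_ne_one' ℝ) ▸ left_mem_Icc.2 zero_le_one
  exact ContinuousWithinAt.closure_le h0
    (continuousAt_Cfun_zero hγβ hγα).continuousWithinAt continuousWithinAt_const hpos

theorem sSup_Cmax_eq_max (hα : α < 0) (hβ : 0 < β) :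
    sSup (Cmax α β '' Ioo (-(1 / β)) (-(1 / α))) =
      max ((2 : ℝ) ^ (1 / β)) ((2 : ℝ) ^ (-(1 / α))) := by
  have hle : -(1 / β) ≤ -(1 / α) := (neg_one_div_lt_neg_one_div hα hβ).le
  have hαβ : α ≠ β := (hα.trans hβ).ne
  refine le_antisymm ?_ (max_le ?_ ?_)
  · refine Real.sSup_le ?_ (le_max_of_le_left (by positivity))
    rintro _ ⟨γ, hγ, rfl⟩
    exact Cmax_le_max hα hβ (Ioo_subset_Icc_self hγ)
  · rw [← Cfun_neg_inv_right_zero hβ.ne' hαβ]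
    exact Cfun_zero_le_sSup_Cmax hα hβ (left_mem_Icc.2 hle)
  · rw [← Cfun_neg_inv_left_zero hα.ne hαβ]
    exact Cfun_zero_le_sSup_Cmax hα hβ (right_mem_Icc.2 hle)

end

/-- For `α < 0 < β`, the constant `C_{α,β} = sup_{γ ∈ (-1/β,-1/α)} C_{α,β,γ}` equals
`2^{1/β}` when `0 < β ≤ -α`, and `2^{-1/α}` when `β > -α`; equivalently it equals
`2^{1/min{|α|,β}}`. -/
theorem Cab_case_neg_pos
    (α β : ℝ) (hα : α < 0) (hβ : 0 < β) :
    (β ≤ -α →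
      sSup {c | ∃ γ : ℝ, -(1 / β) < γ ∧ γ < -(1 / α) ∧ c = Cmax α β γ} =
        (2 : ℝ) ^ (1 / β)) ∧
    (-α < β →
      sSup {c | ∃ γ : ℝ, -(1 / β) < γ ∧ γ < -(1 / α) ∧ c = Cmax α β γ} =
        (2 : ℝ) ^ (-(1 / α))) ∧
    sSup {c | ∃ γ : ℝ, -(1 / β) < γ ∧ γ < -(1 / α) ∧ c = Cmax α β γ} =
      (2 : ℝ) ^ (min |α| β)⁻¹ := by
  have hS : {c | ∃ γ : ℝ, -(1 / β) < γ ∧ γ < -(1 / α) ∧ c = Cmax α β γ} =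
      Cmax α β '' Ioo (-(1 / β)) (-(1 / α)) := by
    ext c
    simp only [mem_ofPred_eq, mem_image, mem_Ioo, and_assoc, eq_comm]
  have hmono := Real.monotone_rpow_of_base_ge_one one_le_two
  rw [hS, sSup_Cmax_eq_max hα hβ, abs_of_neg hα, one_div, one_div, ← inv_neg]
  refine ⟨fun h => max_eq_left (hmono (inv_anti₀ hβ h)),
    fun h => max_eq_right (hmono (inv_anti₀ (neg_pos.2 hα) h.le)), ?_⟩
  rcases le_total β (-α) with h | h
  · rw [min_eq_right h, max_eq_left (hmono (inv_anti₀ hβ h))]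
  · rw [min_eq_left h, max_eq_right (hmono (inv_anti₀ (neg_pos.2 hα) h))]
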